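/- A model tree T_n with branching numbers n(r) ≥ 1 is stochastically complete if and only if Σ_{r=0}^∞ 1/n(r) = ∞. Equivalently: for a model tree rooted at x₀ where every vertex at distance r from x₀ has exactly n(r) neighbors at distance r+1 (and, for r ≥ 1, exactly one neighbor at distance r−1), there exists a bounded positive function v with Δv = λv for some (equivalently all) λ < 0 if and only if Σ 1/n(r) < ∞. -/

import Mathlib

/-!
Let `v > 0` be bounded with `Δv = -v` and let `S r` be its sum over the sphere of radius `r`.
Summing the equation over a sphere, where every vertex has one inner and `n r` outer neighbours,
gives `S (r + 2) = (n (r + 1) + 2) S (r + 1) - n r S r`, whence `S (r + 1) ≥ (n r + 1) S r`.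
The sphere has at most `∏_{k<r} n k` vertices, so boundedness of `v` bounds `∏ (1 + 1/n k) ≥ 1 + ∑ 1/n k`.

Conversely, `g (d(x₀, x))` is `λ`-harmonic iff `g` solves a second order recursion whose solution
with `g 0 = 1` is positive and increasing. The relative increments
`t r = (g (r + 1) - g r) / g r` satisfy `t (r + 1) ≤ (t r - λ) / n (r + 1)`, hence are summable
when `∑ 1/n r < ∞`, and then `g r = ∏_{k<r} (1 + t k) ≤ exp (∑ t)` is bounded.
-/

open Finset

/-- The graph Laplacian `Δf(x) = ∑_{y ∼ x} (f(x) - f(y))`. -/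
def graphLap {V : Type*} (G : SimpleGraph V) [G.LocallyFinite] (f : V → ℝ) (x : V) : ℝ :=
  ∑ y ∈ G.neighborFinset x, (f x - f y)

/-- `m_{+1}(x)`: the number of neighbors of `x` in the next sphere about `x₀`. -/
noncomputable def mPlus {V : Type*} (G : SimpleGraph V) [G.LocallyFinite] (x₀ x : V) : ℕ :=
  ((G.neighborFinset x).filter (fun y => G.dist x₀ y = G.dist x₀ x + 1)).card

/-- `m_{-1}(x)`: the number of neighbors of `x` in the previous sphere about `x₀`. -/
noncomputable def mMinus {V : Type*} (G : SimpleGraph V) [G.LocallyFinite] (x₀ x : V) : ℕ :=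
  ((G.neighborFinset x).filter (fun y => G.dist x₀ y + 1 = G.dist x₀ x)).card

theorem one_add_sum_le_prod_one_add {ι R : Type*} [CommSemiring R] [PartialOrder R]
    [IsOrderedRing R] (s : Finset ι) {f : ι → R} (hf : ∀ i ∈ s, 0 ≤ f i) :
    1 + ∑ i ∈ s, f i ≤ ∏ i ∈ s, (1 + f i) := by
  classical
  induction s using Finset.induction_on with
  | empty => simp
  | insert a s ha ih =>
    have hfa : 0 ≤ f a := hf a (mem_insert_self a s)
    have hs : 0 ≤ ∑ i ∈ s, f i := sum_nonneg fun i hi => hf i (mem_insert_of_mem hi)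
    rw [sum_insert ha, prod_insert ha]
    calc 1 + (f a + ∑ i ∈ s, f i) ≤ (1 + f a) * (1 + ∑ i ∈ s, f i) := by
          rw [add_mul, one_mul, mul_add, mul_one]
          calc 1 + (f a + ∑ i ∈ s, f i) = 1 + ∑ i ∈ s, f i + f a := by abel
            _ ≤ 1 + ∑ i ∈ s, f i + (f a + f a * ∑ i ∈ s, f i) := by
              gcongr
              exact le_add_of_nonneg_right (mul_nonneg hfa hs)
      _ ≤ (1 + f a) * ∏ i ∈ s, (1 + f i) :=
          mul_le_mul_of_nonneg_left (ih fun i hi => hf i (mem_insert_of_mem hi))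
            (add_nonneg zero_le_one hfa)

theorem summable_one_div_of_mul_prod_add_one_le {a : ℕ → ℝ} (ha : ∀ k, 0 < a k) {c K : ℝ}
    (hc : 0 < c) (h : ∀ r, c * ∏ k ∈ range r, (a k + 1) ≤ K * ∏ k ∈ range r, a k) :
    Summable fun k => 1 / a k := by
  refine summable_of_sum_range_le (c := K / c) (fun k => (one_div_pos.2 (ha k)).le) fun r => ?_
  have hprod :
      ∏ k ∈ range r, (1 + 1 / a k) = (∏ k ∈ range r, (a k + 1)) / ∏ k ∈ range r, a k := by
    rw [← prod_div_distrib]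
    exact prod_congr rfl fun k _ => by field_simp [(ha k).ne']
  have hpos : 0 < ∏ k ∈ range r, a k := prod_pos fun k _ => ha k
  calc ∑ k ∈ range r, 1 / a k ≤ 1 + ∑ k ∈ range r, 1 / a k := le_add_of_nonneg_left zero_le_one
    _ ≤ ∏ k ∈ range r, (1 + 1 / a k) :=
        one_add_sum_le_prod_one_add _ fun k _ => (one_div_pos.2 (ha k)).le
    _ ≤ K / c := by
        rw [hprod, div_le_div_iff₀ hpos hc, mul_comm]
        exact h r

/-- The sequence is bounded eventually because `c → 0`, and then it is dominated by `c`. -/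
theorem summable_of_le_mul_add {a c : ℕ → ℝ} {L : ℝ} (ha : ∀ r, 0 ≤ a r) (hL : 0 ≤ L)
    (hc₀ : ∀ r, 0 ≤ c r) (hc : Summable c)
    (hrec : ∀ r, a (r + 1) ≤ c (r + 1) * (a r + L)) : Summable a := by
  obtain ⟨R, hR⟩ := Filter.eventually_atTop.1 (hc.tendsto_atTop_zero.eventually_le_const
    (by norm_num : (0 : ℝ) < 1 / 2))
  set M := max (a R) L
  have hbdd : ∀ r, R ≤ r → a r ≤ M := by
    intro r hr
    induction r, hr using Nat.le_induction with
    | base => exact le_max_left _ _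
    | succ r hr ih =>
      calc a (r + 1) ≤ c (r + 1) * (a r + L) := hrec r
        _ ≤ 1 / 2 * (M + M) :=
          mul_le_mul (hR _ (by omega)) (add_le_add ih (le_max_right _ _))
            (add_nonneg (ha r) hL) (by norm_num)
        _ = M := by ring
  refine (summable_nat_add_iff (R + 1)).1 <|
    ((summable_nat_add_iff (R + 1)).2 hc |>.mul_right (M + L)).of_nonneg_of_le
      (fun r => ha _) fun r => ?_
  calc a (r + (R + 1)) ≤ c (r + (R + 1)) * (a (r + R) + L) := hrec (r + R)
    _ ≤ c (r + (R + 1)) * (M + L) := by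
        have := hc₀ (r + (R + 1))
        gcongr
        exact hbdd _ (by omega)

/-- `(g r, g (r + 1) - g r)`, where `g` with `g 0 = 1` is the profile of the radial solution of
`Δv = l v` on the model tree with branching numbers `a` (see `eq_zero`, `eq_succ`). -/
noncomputable def radialProfile (l : ℝ) (a : ℕ → ℝ) : ℕ → ℝ × ℝ
  | 0 => (1, -l / a 0)
  | r + 1 =>
    ((radialProfile l a r).1 + (radialProfile l a r).2,
      ((radialProfile l a r).2 - l * ((radialProfile l a r).1 + (radialProfile l a r).2)) /
        a (r + 1))

namespace radialProfile

variable {l : ℝ} {a : ℕ → ℝ}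

theorem fst_succ (r : ℕ) :
    (radialProfile l a (r + 1)).1 = (radialProfile l a r).1 + (radialProfile l a r).2 := rfl

theorem snd_succ (r : ℕ) : (radialProfile l a (r + 1)).2 =
    ((radialProfile l a r).2 - l * (radialProfile l a (r + 1)).1) / a (r + 1) := rfl

theorem pos (hl : l < 0) (ha : ∀ r, 0 < a r) (r : ℕ) :
    0 < (radialProfile l a r).1 ∧ 0 < (radialProfile l a r).2 := by
  induction r with
  | zero => exact ⟨one_pos, div_pos (neg_pos.2 hl) (ha 0)⟩
  | succ r ih =>
    have hfst : 0 < (radialProfile l a (r + 1)).1 := by rw [fst_succ]; exact add_pos ih.1 ih.2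
    refine ⟨hfst, ?_⟩
    rw [snd_succ]
    have : 0 < -l * (radialProfile l a (r + 1)).1 := mul_pos (neg_pos.2 hl) hfst
    exact div_pos (by linarith [ih.2]) (ha _)

theorem eq_zero (ha : a 0 ≠ 0) :
    a 0 * ((radialProfile l a 0).1 - (radialProfile l a 1).1) = l * (radialProfile l a 0).1 := by
  rw [fst_succ]
  simp only [radialProfile]
  field_simp
  ring

theorem eq_succ {r : ℕ} (ha : a (r + 1) ≠ 0) :
    a (r + 1) * ((radialProfile l a (r + 1)).1 - (radialProfile l a (r + 2)).1) +
      ((radialProfile l a (r + 1)).1 - (radialProfile l a r).1) =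
        l * (radialProfile l a (r + 1)).1 := by
  rw [fst_succ (r + 1), snd_succ r, mul_sub, mul_add, mul_div_cancel₀ _ ha, fst_succ r]
  ring

/-- `g` is a product of the factors `1 + t r`, where `t = (g (r+1) - g r) / g r` is summable. -/
theorem fst_bounded (hl : l < 0) (ha : ∀ r, 0 < a r) (hs : Summable fun r => 1 / a r) :
    ∃ C, ∀ r, (radialProfile l a r).1 ≤ C := by
  set g := fun r => (radialProfile l a r).1
  set t := fun r => (radialProfile l a r).2 / (radialProfile l a r).1
  have ht : ∀ r, 0 ≤ t r := fun r => (div_pos (pos hl ha r).2 (pos hl ha r).1).le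
  have hrec : ∀ r, t (r + 1) ≤ 1 / a (r + 1) * (t r + -l) := by
    intro r
    have hg : g r ≤ g (r + 1) := by simp only [g, fst_succ]; linarith [(pos hl ha r).2]
    have hsucc : t (r + 1) = 1 / a (r + 1) * ((radialProfile l a r).2 / g (r + 1) + -l) := by
      simp only [t, g, snd_succ r]
      field_simp [(pos hl ha (r + 1)).1.ne']
      ring
    rw [hsucc]
    gcongr
    · exact (one_div_pos.2 (ha _)).le
    exact div_le_div_of_nonneg_left (pos hl ha r).2.le (pos hl ha r).1 hg
  have hprod : ∀ r, g r = ∏ k ∈ range r, (1 + t k) := by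
    intro r
    induction r with
    | zero => rfl
    | succ r ih =>
      rw [prod_range_succ, ← ih]
      simp only [g, t, fst_succ]
      field_simp [(pos hl ha r).1.ne']
  have htsum : Summable t := summable_of_le_mul_add ht (neg_nonneg.2 hl.le)
    (fun r => (one_div_pos.2 (ha r)).le) hs hrec
  refine ⟨Real.exp (∑' k, t k), fun r => ?_⟩
  calc g r = ∏ k ∈ range r, (1 + t k) := hprod r
    _ ≤ Real.exp (∑ k ∈ range r, t k) := Real.prod_one_add_le_exp_sum _ ht
    _ ≤ Real.exp (∑' k, t k) := Real.exp_le_exp.2 (htsum.sum_le_tsum _ fun k _ => ht k)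

end radialProfile

namespace SimpleGraph

theorem Connected.exists_adj_dist_eq {V : Type*} {G : SimpleGraph V} (hG : G.Connected)
    {x₀ x : V} {r : ℕ} (hx : G.dist x₀ x = r + 1) : ∃ z, G.Adj z x ∧ G.dist x₀ z = r := by
  obtain ⟨p, hp⟩ := hG.exists_walk_length_eq_dist x₀ x
  have hnil : ¬ p.Nil := by rw [← Walk.length_eq_zero_iff]; omega
  have hadj := p.adj_penultimate hnil
  refine ⟨p.penultimate, hadj, le_antisymm ?_ ?_⟩
  · simpa [Walk.length_dropLast, hp, hx] using dist_le p.dropLast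
  · have := hadj.diff_dist_adj (u := x₀)
    omega

variable {V : Type*} (G : SimpleGraph V) [G.LocallyFinite] (x₀ : V)

noncomputable def outerNbrs (x : V) : Finset V :=
  (G.neighborFinset x).filter (fun y => G.dist x₀ y = G.dist x₀ x + 1)

noncomputable def innerNbrs (x : V) : Finset V :=
  (G.neighborFinset x).filter (fun y => G.dist x₀ y + 1 = G.dist x₀ x)

/-- For connected `G`, the sphere of radius `r` about `x₀`. -/
noncomputable def sphereFinset : ℕ → Finset V
  | 0 => {x₀}
  | r + 1 => letI := Classical.decEq V; (sphereFinset r).biUnion (G.outerNbrs x₀)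

variable {G x₀} {n : ℕ → ℕ}

theorem card_outerNbrs (x : V) : #(G.outerNbrs x₀ x) = mPlus G x₀ x := rfl

theorem card_innerNbrs (x : V) : #(G.innerNbrs x₀ x) = mMinus G x₀ x := rfl

theorem mMinus_eq_zero {x : V} (hx : G.dist x₀ x = 0) : mMinus G x₀ x = 0 := by
  rw [← card_innerNbrs, card_eq_zero, innerNbrs, filter_eq_empty_iff]
  omega

theorem outerNbrs_self : G.outerNbrs x₀ x₀ = G.neighborFinset x₀ :=
  filter_true_of_mem fun y hy => by simpa using (mem_neighborFinset _ _ _).1 hy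

theorem degree_eq_mPlus_self : G.degree x₀ = mPlus G x₀ x₀ := by
  rw [← card_outerNbrs, outerNbrs_self, card_neighborFinset_eq_degree]

theorem sphereFinset_one : G.sphereFinset x₀ 1 = G.neighborFinset x₀ := by
  simp [sphereFinset, outerNbrs_self]

theorem Connected.mem_sphereFinset (hG : G.Connected) {r : ℕ} {x : V} :
    x ∈ G.sphereFinset x₀ r ↔ G.dist x₀ x = r := by
  induction r generalizing x with
  | zero => simp [sphereFinset, hG.dist_eq_zero_iff, eq_comm]
  | succ r ih =>
    simp only [sphereFinset, mem_biUnion, outerNbrs, mem_filter, mem_neighborFinset, ih]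
    constructor
    · rintro ⟨z, rfl, -, hx⟩
      exact hx
    · intro hx
      obtain ⟨z, hz, rfl⟩ := hG.exists_adj_dist_eq hx
      exact ⟨z, rfl, hz, hx⟩

theorem Connected.ne_of_mem_sphereFinset_succ (hG : G.Connected) {r : ℕ} {x : V}
    (hx : x ∈ G.sphereFinset x₀ (r + 1)) : x ≠ x₀ := by
  rintro rfl
  simp [hG.mem_sphereFinset] at hx

theorem Connected.card_sphereFinset_le_prod (hG : G.Connected)
    (hplus : ∀ x, mPlus G x₀ x = n (G.dist x₀ x)) (r : ℕ) :
    #(G.sphereFinset x₀ r) ≤ ∏ k ∈ range r, n k := by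
  classical
  induction r with
  | zero => simp [sphereFinset]
  | succ r ih =>
    calc #(G.sphereFinset x₀ (r + 1)) ≤ ∑ x ∈ G.sphereFinset x₀ r, #(G.outerNbrs x₀ x) :=
          card_biUnion_le
      _ = #(G.sphereFinset x₀ r) * n r := by
          rw [sum_const_nat fun x hx => by rw [card_outerNbrs, hplus, hG.mem_sphereFinset.1 hx]]
      _ ≤ ∏ k ∈ range (r + 1), n k := by
          rw [prod_range_succ]
          exact Nat.mul_le_mul_right _ ih

theorem sum_neighborFinset_eq_add {M : Type*} [AddCommMonoid M] {x : V}
    (hx : G.degree x = mPlus G x₀ x + mMinus G x₀ x) (f : V → M) :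
    ∑ y ∈ G.neighborFinset x, f y = ∑ y ∈ G.outerNbrs x₀ x, f y + ∑ y ∈ G.innerNbrs x₀ x, f y := by
  classical
  have hdisj : Disjoint (G.outerNbrs x₀ x) (G.innerNbrs x₀ x) :=
    disjoint_filter.2 fun y _ h => by omega
  have hunion : G.outerNbrs x₀ x ∪ G.innerNbrs x₀ x = G.neighborFinset x :=
    eq_of_subset_of_card_le (union_subset (filter_subset _ _) (filter_subset _ _)) <| by
      rw [card_union_of_disjoint hdisj, card_outerNbrs, card_innerNbrs,
        card_neighborFinset_eq_degree, hx]
  rw [← hunion, sum_union hdisj]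

theorem graphLap_eq_degree_mul_sub (f : V → ℝ) (x : V) :
    graphLap G f x = G.degree x * f x - ∑ y ∈ G.neighborFinset x, f y := by
  rw [graphLap, sum_sub_distrib, sum_const, card_neighborFinset_eq_degree, nsmul_eq_mul]

theorem graphLap_comp_dist {x : V} (hx : G.degree x = mPlus G x₀ x + mMinus G x₀ x)
    (g : ℕ → ℝ) : graphLap G (fun y => g (G.dist x₀ y)) x =
      mPlus G x₀ x * (g (G.dist x₀ x) - g (G.dist x₀ x + 1)) +
        mMinus G x₀ x * (g (G.dist x₀ x) - g (G.dist x₀ x - 1)) := by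
  rw [graphLap, sum_neighborFinset_eq_add hx, ← card_outerNbrs, ← card_innerNbrs,
    ← nsmul_eq_mul, ← nsmul_eq_mul, ← sum_const, ← sum_const]
  congr 1 <;> refine sum_congr rfl fun y hy => ?_
  · rw [(mem_filter.1 hy).2]
  · rw [← (mem_filter.1 hy).2, Nat.add_sub_cancel]

theorem Connected.sum_sphereFinset_sum_outerNbrs (hG : G.Connected) (r : ℕ) (f : V → ℝ) :
    ∑ x ∈ G.sphereFinset x₀ r, ∑ y ∈ G.outerNbrs x₀ x, f y =
      ∑ y ∈ G.sphereFinset x₀ (r + 1), mMinus G x₀ y * f y := by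
  rw [sum_comm' (t' := G.sphereFinset x₀ (r + 1)) (s' := G.innerNbrs x₀)]
  · simp only [sum_const, card_innerNbrs, nsmul_eq_mul]
  · intro x y
    simp only [hG.mem_sphereFinset, outerNbrs, innerNbrs, mem_filter, mem_neighborFinset,
      G.adj_comm y x]
    grind

theorem Connected.sum_sphereFinset_sum_innerNbrs (hG : G.Connected) (r : ℕ) (f : V → ℝ) :
    ∑ x ∈ G.sphereFinset x₀ (r + 1), ∑ y ∈ G.innerNbrs x₀ x, f y =
      ∑ y ∈ G.sphereFinset x₀ r, mPlus G x₀ y * f y := by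
  rw [sum_comm' (t' := G.sphereFinset x₀ r) (s' := G.outerNbrs x₀)]
  · simp only [sum_const, card_outerNbrs, nsmul_eq_mul]
  · intro x y
    simp only [hG.mem_sphereFinset, outerNbrs, innerNbrs, mem_filter, mem_neighborFinset,
      G.adj_comm y x]
    grind

theorem graphLap_comp_dist_eq_mul {l : ℝ} (hplus : ∀ x, mPlus G x₀ x = n (G.dist x₀ x))
    (hminus : ∀ x, x ≠ x₀ → mMinus G x₀ x = 1)
    (hsplit : ∀ x, G.degree x = mPlus G x₀ x + mMinus G x₀ x) {g : ℕ → ℝ}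
    (hg₀ : n 0 * (g 0 - g 1) = l * g 0)
    (hg : ∀ r, n (r + 1) * (g (r + 1) - g (r + 2)) + (g (r + 1) - g r) = l * g (r + 1))
    (x : V) : graphLap G (fun y => g (G.dist x₀ y)) x = l * g (G.dist x₀ x) := by
  rw [graphLap_comp_dist (hsplit x), hplus]
  rcases h : G.dist x₀ x with _ | r
  · rw [mMinus_eq_zero h, ← hg₀]
    ring
  · have hx : x ≠ x₀ := by rintro rfl; simp at h
    rw [hminus x hx, ← hg r]
    push_cast
    ring

theorem sum_sphereFinset_one {v : V → ℝ} {l : ℝ} (hlap : graphLap G v x₀ = l * v x₀) :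
    ∑ x ∈ G.sphereFinset x₀ 1, v x = (G.degree x₀ - l) * v x₀ := by
  rw [sphereFinset_one]
  rw [graphLap_eq_degree_mul_sub] at hlap
  linarith

theorem Connected.sum_sphereFinset_add_two (hG : G.Connected)
    (hplus : ∀ x, mPlus G x₀ x = n (G.dist x₀ x)) (hminus : ∀ x, x ≠ x₀ → mMinus G x₀ x = 1)
    (hsplit : ∀ x, G.degree x = mPlus G x₀ x + mMinus G x₀ x) {v : V → ℝ} {l : ℝ}
    (hlap : ∀ x, graphLap G v x = l * v x) (r : ℕ) :
    ∑ x ∈ G.sphereFinset x₀ (r + 2), v x =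
      (n (r + 1) + 1 - l) * ∑ x ∈ G.sphereFinset x₀ (r + 1), v x -
        n r * ∑ x ∈ G.sphereFinset x₀ r, v x := by
  have hpt : ∀ x ∈ G.sphereFinset x₀ (r + 1), (n (r + 1) + 1 - l) * v x =
      ∑ y ∈ G.outerNbrs x₀ x, v y + ∑ y ∈ G.innerNbrs x₀ x, v y := by
    intro x hx
    have := hlap x
    rw [graphLap_eq_degree_mul_sub, hsplit, hplus, hminus x (hG.ne_of_mem_sphereFinset_succ hx),
      hG.mem_sphereFinset.1 hx, sum_neighborFinset_eq_add (hsplit x)] at this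
    push_cast at this
    linarith
  have hout : ∑ x ∈ G.sphereFinset x₀ (r + 1), ∑ y ∈ G.outerNbrs x₀ x, v y =
      ∑ y ∈ G.sphereFinset x₀ (r + 2), v y := by
    rw [hG.sum_sphereFinset_sum_outerNbrs]
    refine sum_congr rfl fun y hy => ?_
    rw [hminus y (hG.ne_of_mem_sphereFinset_succ hy), Nat.cast_one, one_mul]
  have hin : ∑ x ∈ G.sphereFinset x₀ (r + 1), ∑ y ∈ G.innerNbrs x₀ x, v y =
      n r * ∑ y ∈ G.sphereFinset x₀ r, v y := by
    rw [hG.sum_sphereFinset_sum_innerNbrs, mul_sum]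
    refine sum_congr rfl fun y hy => ?_
    rw [hplus, hG.mem_sphereFinset.1 hy]
  rw [← hout, ← hin, eq_sub_iff_add_eq, ← sum_add_distrib, ← sum_congr rfl hpt, mul_sum]

theorem Connected.mul_sum_sphereFinset_le_succ (hG : G.Connected)
    (hplus : ∀ x, mPlus G x₀ x = n (G.dist x₀ x)) (hminus : ∀ x, x ≠ x₀ → mMinus G x₀ x = 1)
    (hsplit : ∀ x, G.degree x = mPlus G x₀ x + mMinus G x₀ x) {v : V → ℝ} (hv : ∀ x, 0 ≤ v x)
    {l : ℝ} (hl : l ≤ 0) (hlap : ∀ x, graphLap G v x = l * v x) (r : ℕ) :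
    (n r - l) * ∑ x ∈ G.sphereFinset x₀ r, v x ≤ ∑ x ∈ G.sphereFinset x₀ (r + 1), v x := by
  induction r with
  | zero =>
    rw [sum_sphereFinset_one (hlap x₀), degree_eq_mPlus_self, hplus, dist_self]
    simp [sphereFinset]
  | succ r ih =>
    have hS : 0 ≤ ∑ x ∈ G.sphereFinset x₀ r, v x := sum_nonneg fun x _ => hv x
    have := mul_nonneg (neg_nonneg.2 hl) hS
    rw [hG.sum_sphereFinset_add_two hplus hminus hsplit hlap]
    linarith

theorem Connected.mul_prod_le_sum_sphereFinset (hG : G.Connected)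
    (hplus : ∀ x, mPlus G x₀ x = n (G.dist x₀ x)) (hminus : ∀ x, x ≠ x₀ → mMinus G x₀ x = 1)
    (hsplit : ∀ x, G.degree x = mPlus G x₀ x + mMinus G x₀ x) {v : V → ℝ} (hv : ∀ x, 0 ≤ v x)
    {l : ℝ} (hl : l ≤ 0) (hlap : ∀ x, graphLap G v x = l * v x) (r : ℕ) :
    v x₀ * ∏ k ∈ range r, (n k - l) ≤ ∑ x ∈ G.sphereFinset x₀ r, v x := by
  induction r with
  | zero => simp [sphereFinset]
  | succ r ih =>
    have hn : 0 ≤ (n r : ℝ) - l := by linarith [(n r).cast_nonneg (α := ℝ)]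
    calc v x₀ * ∏ k ∈ range (r + 1), ((n k : ℝ) - l)
        = (n r - l) * (v x₀ * ∏ k ∈ range r, ((n k : ℝ) - l)) := by rw [prod_range_succ]; ring
      _ ≤ (n r - l) * ∑ x ∈ G.sphereFinset x₀ r, v x := mul_le_mul_of_nonneg_left ih hn
      _ ≤ _ := hG.mul_sum_sphereFinset_le_succ hplus hminus hsplit hv hl hlap r

theorem Connected.sum_sphereFinset_le_mul_prod (hG : G.Connected)
    (hplus : ∀ x, mPlus G x₀ x = n (G.dist x₀ x)) {v : V → ℝ} {C : ℝ} (hC : 0 ≤ C)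
    (hvC : ∀ x, v x ≤ C) (r : ℕ) :
    ∑ x ∈ G.sphereFinset x₀ r, v x ≤ C * ∏ k ∈ range r, (n k : ℝ) := by
  calc ∑ x ∈ G.sphereFinset x₀ r, v x ≤ #(G.sphereFinset x₀ r) * C := by
        simpa using sum_le_card_nsmul _ _ _ fun x _ => hvC x
    _ ≤ (∏ k ∈ range r, n k : ℕ) * C := by
        gcongr
        exact_mod_cast hG.card_sphereFinset_le_prod hplus r
    _ = C * ∏ k ∈ range r, (n k : ℝ) := by push_cast; ring

end SimpleGraph

theorem model_tree_stochastically_complete_iff_general {V : Type*}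
    (G : SimpleGraph V) [G.LocallyFinite] (hG : G.Connected) (x₀ : V)
    (n : ℕ → ℕ) (hn : ∀ r, 1 ≤ n r)
    (hplus : ∀ x : V, mPlus G x₀ x = n (G.dist x₀ x))
    (hminus : ∀ x : V, x ≠ x₀ → mMinus G x₀ x = 1)
    (hdeg : ∀ x : V, x ≠ x₀ → G.degree x = n (G.dist x₀ x) + 1) :
    (∀ l : ℝ, l < 0 →
        ∃ v : V → ℝ, ∃ C : ℝ, (∀ x, 0 < v x) ∧ (∀ x, v x ≤ C) ∧
          ∀ x, graphLap G v x = l * v x) ↔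
      Summable (fun r : ℕ => 1 / (n r : ℝ)) := by
  have hn₀ : ∀ r, (0 : ℝ) < n r := fun r => by exact_mod_cast hn r
  have hsplit : ∀ x, G.degree x = mPlus G x₀ x + mMinus G x₀ x := by
    intro x
    rcases eq_or_ne x x₀ with rfl | hx
    · rw [SimpleGraph.mMinus_eq_zero SimpleGraph.dist_self, SimpleGraph.degree_eq_mPlus_self,
        add_zero]
    · rw [hdeg x hx, hplus, hminus x hx]
  constructor
  · intro h
    obtain ⟨v, C, hv, hvC, hlap⟩ := h (-1) (by norm_num)
    refine summable_one_div_of_mul_prod_add_one_le hn₀ (hv x₀) (K := C) fun r => ?_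
    simpa using (hG.mul_prod_le_sum_sphereFinset hplus hminus hsplit (fun x => (hv x).le)
      (by norm_num) hlap r).trans
        (hG.sum_sphereFinset_le_mul_prod hplus ((hv x₀).le.trans (hvC x₀)) hvC r)
  · intro hs l hl
    obtain ⟨C, hC⟩ := radialProfile.fst_bounded hl hn₀ hs
    exact ⟨fun x => (radialProfile l (n ·) (G.dist x₀ x)).1, C,
      fun x => (radialProfile.pos hl hn₀ _).1, fun x => hC _,
      SimpleGraph.graphLap_comp_dist_eq_mul hplus hminus hsplit
        (g := fun r => (radialProfile l (n ·) r).1) (radialProfile.eq_zero (a := (n ·)) (hn₀ 0).ne')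
        fun r => radialProfile.eq_succ (a := (n ·)) (hn₀ (r + 1)).ne'⟩

/-- **Stochastic completeness of model trees.**  Let `G` be a model tree with root `x₀`
and branching numbers `n(r) ≥ 1`: every vertex at distance `r` from `x₀` has exactly
`n(r)` neighbors at distance `r+1`, every vertex other than the root has exactly one
neighbor at distance `r-1`, the root has valence `n(0)`, and every other vertex at
distance `r` has valence `n(r) + 1`.  Then there exists a bounded positive `λ`-harmonic
function (`Δv = λv`) for every `λ < 0` — i.e. the tree is stochastically incomplete —
if and only if `∑_{r} 1/n(r) < ∞`. -/
theorem model_tree_stochastically_complete_iff {V : Type*} [Infinite V]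
    (G : SimpleGraph V) [G.LocallyFinite] (hG : G.Connected) (x₀ : V)
    (n : ℕ → ℕ) (hn : ∀ r, 1 ≤ n r)
    (hplus : ∀ x : V, mPlus G x₀ x = n (G.dist x₀ x))
    (hminus : ∀ x : V, x ≠ x₀ → mMinus G x₀ x = 1)
    (hdeg₀ : G.degree x₀ = n 0)
    (hdeg : ∀ x : V, x ≠ x₀ → G.degree x = n (G.dist x₀ x) + 1) :
    (∀ l : ℝ, l < 0 →
        ∃ v : V → ℝ, ∃ C : ℝ, (∀ x, 0 < v x) ∧ (∀ x, v x ≤ C) ∧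
          ∀ x, graphLap G v x = l * v x) ↔
      Summable (fun r : ℕ => 1 / (n r : ℝ)) :=
  model_tree_stochastically_complete_iff_general G hG x₀ n hn hplus hminus hdeg
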